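/- Let T be an AND-OR synthesis tree with value function V : M → ℝ in which every reaction node has a nonempty list of molecule children. Then the minimum of V_t(π) over all frontier positions π of T equals rn_V of the root of T, i.e. the frontier node selected by Retro* attains exactly the minimum total cost over all synthesis routes of the target. -/

import Mathlib

/-- AND-OR synthesis trees over a molecule type `M`: a molecule node is either a
frontier leaf carrying an element of `M`, or an internal node carrying a nonempty
list (encoded as head plus tail) of reaction children; a reaction node is a pair
of a real cost and a list of molecule children. -/
inductive Mol (M : Type) where
  | frontier : M → Mol M
  | node : (ℝ × List (Mol M)) → List (ℝ × List (Mol M)) → Mol M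

mutual
/-- Reaction number of a molecule node. -/
noncomputable def rn {M : Type} (V : M → ℝ) : Mol M → ℝ
  | .frontier m => V m
  | .node r rs => (rs.attach.map fun ⟨R, _⟩ => rnR V R).foldr min (rnR V r)
termination_by u => sizeOf u
decreasing_by
  · simp; omega
  · have := List.sizeOf_lt_of_mem ‹R ∈ rs›; simp; omega

/-- Reaction number of a reaction node. -/
noncomputable def rnR {M : Type} (V : M → ℝ) : ℝ × List (Mol M) → ℝ
  | (c, ms) => c + (ms.attach.map fun ⟨u, _⟩ => rn V u).sum
termination_by R => sizeOf R
decreasing_by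
  · have := List.sizeOf_lt_of_mem ‹u ∈ ms›; simp; omega
end

/-- A frontier position: a root-to-leaf path selecting, at each internal
molecule node, one reaction child and one molecule child of that reaction,
terminating at a frontier leaf. -/
inductive FPos {M : Type} : Mol M → Type
  | leaf (m : M) : FPos (.frontier m)
  | step {r rs} (i : Fin (r :: rs : List (ℝ × List (Mol M))).length)
      (j : Fin ((r :: rs).get i).2.length)
      (rest : FPos (((r :: rs).get i).2.get j)) :
      FPos (.node r rs)

/-- `Vt V π`: the sum of the costs of the reaction nodes on `π`, plus the sum of
`rn V` over the off-path molecule children of those reaction nodes, plus `V` of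
the molecule at the leaf of `π`. -/
noncomputable def Vt {M : Type} (V : M → ℝ) : {u : Mol M} → FPos u → ℝ
  | _, .leaf m => V m
  | _, .step (r := r) (rs := rs) i j rest =>
      ((r :: rs).get i).1
        + ∑ j' ∈ Finset.univ.erase j, rn V (((r :: rs).get i).2.get j')
        + Vt V rest

/-- Every reaction node occurring in the tree has a nonempty list of molecule
children. -/
inductive NonemptyRxns {M : Type} : Mol M → Prop
  | frontier (m : M) : NonemptyRxns (.frontier m)
  | node {r rs} :
      (∀ R ∈ (r :: rs : List (ℝ × List (Mol M))), R.2 ≠ []) →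
      (∀ R ∈ (r :: rs : List (ℝ × List (Mol M))), ∀ u ∈ R.2, NonemptyRxns u) →
      NonemptyRxns (.node r rs)

/-! Across one step of a frontier position, the excess `Vt - rn` grows by exactly
`rnR R - rn u`, where `R` is the reaction chosen at the molecule node `u`. As `rn u` is the
minimum of `rnR` over the reactions of `u`, every such increment is nonnegative, and it vanishes
along a path that always picks a minimizing reaction; such a path exists once no reaction is empty. -/

theorem List.isLeast_foldr_min {α : Type*} [LinearOrder α] (a : α) (l : List α) :
    IsLeast {x | x ∈ a :: l} (l.foldr min a) := by
  induction l with
  | nil => simp [IsLeast, lowerBounds]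
  | cons b l ih =>
    obtain ⟨ih_mem, ih_le⟩ := ih
    simp only [IsLeast, lowerBounds, Set.mem_ofPred_eq, List.mem_cons, List.foldr_cons]
      at ih_mem ih_le ⊢
    refine ⟨?_, ?_⟩
    · rcases min_choice b (l.foldr min a) with h | h <;> grind
    · grind

namespace Mol

variable {M : Type} (V : M → ℝ)

theorem rnR_eq (R : ℝ × List (Mol M)) : rnR V R = R.1 + (R.2.map (rn V)).sum := by
  obtain ⟨c, ms⟩ := R
  rw [rnR]
  simp

theorem isLeast_rn_node (r : ℝ × List (Mol M)) (rs : List (ℝ × List (Mol M))) :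
    IsLeast {x | ∃ R ∈ r :: rs, rnR V R = x} (rn V (.node r rs)) := by
  have h := List.isLeast_foldr_min (rnR V r) (rs.map (rnR V))
  rw [← List.map_cons] at h
  have hrn : rn V (.node r rs) = (rs.map (rnR V)).foldr min (rnR V r) := by
    rw [rn]
    simp
  simpa only [hrn, List.mem_map] using h

theorem Vt_step {r : ℝ × List (Mol M)} {rs : List (ℝ × List (Mol M))}
    (i : Fin (r :: rs).length) (j : Fin ((r :: rs).get i).2.length)
    (rest : FPos (((r :: rs).get i).2.get j)) :
    Vt V (.step i j rest) =
      rnR V ((r :: rs).get i) - rn V (((r :: rs).get i).2.get j) + Vt V rest := by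
  have hsum := Finset.sum_erase_add Finset.univ (fun j' => rn V (((r :: rs).get i).2.get j'))
    (Finset.mem_univ j)
  simp only [List.get_eq_getElem, Fin.sum_univ_fun_getElem] at hsum
  rw [Vt, rnR_eq]
  simp only [List.get_eq_getElem] at hsum ⊢
  linarith

theorem rn_le_Vt {u : Mol M} (π : FPos u) : rn V u ≤ Vt V π := by
  induction π with
  | leaf m => simp [rn, Vt]
  | step i j rest ih =>
    have := (isLeast_rn_node V _ _).2 ⟨_, List.get_mem _ i, rfl⟩
    rw [Vt_step]
    linarith

theorem exists_Vt_eq_rn {u : Mol M} (h : NonemptyRxns u) : ∃ π : FPos u, Vt V π = rn V u := by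
  induction h with
  | frontier m => exact ⟨.leaf m, by simp [rn, Vt]⟩
  | @node r rs hne _ ih =>
    obtain ⟨R, hR, hR_eq⟩ := (isLeast_rn_node V r rs).1
    obtain ⟨i, rfl⟩ := List.mem_iff_get.1 hR
    let j : Fin ((r :: rs).get i).2.length := ⟨0, List.length_pos_iff.2 (hne _ hR)⟩
    obtain ⟨rest, hrest⟩ := ih _ hR _ (List.get_mem _ j)
    exact ⟨.step i j rest, by rw [Vt_step, hrest, hR_eq]; ring⟩

end Mol

/-- if every reaction node of the tree has a nonempty list of
molecule children, then the minimum of `Vt V π` over all frontier positions `π`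
is attained and equals the reaction number of the root, i.e. the frontier node
selected by Retro* attains exactly the minimum total cost over all synthesis
routes of the target. -/
theorem min_Vt_eq_rn_root {M : Type} (V : M → ℝ) (u : Mol M) (h : NonemptyRxns u) :
    IsLeast {x : ℝ | ∃ π : FPos u, Vt V π = x} (rn V u) :=
  ⟨Mol.exists_Vt_eq_rn V h, fun _ ⟨π, hπ⟩ => hπ ▸ Mol.rn_le_Vt V π⟩
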